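/- Let f : ℝ → ℝ be continuous and periodic with period T > 0. Suppose that for every s₀ ∈ ℝ there exist δ > 0 and a function ψ : ℝ → ℝ that is twice differentiable on (s₀ − δ, s₀ + δ), with ψ(s₀) = f(s₀), ψ(x) ≥ f(x) for all x ∈ (s₀ − δ, s₀ + δ), and ψ''(s₀) ≤ 0. Then f is constant. -/

import Mathlib

/-!
Subtracting a small multiple of `(x - c)²` from `f`, where `f c` lies below the endpoint values
on `[a, b]`, yields a function whose minimum on `[a, b]` is interior. At that minimum the upper
support function minus the same quadratic still has a local minimum, yet its second derivative is
strictly negative. Hence `f` has no interior values below `min (f a) (f b)`, and applying this on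
a period starting at a global maximum of `f` shows that `f` is constant.
-/

open Set Filter Topology

def HasUpperSupportAt (f : ℝ → ℝ) (s₀ : ℝ) : Prop :=
  ∃ ψ : ℝ → ℝ, (∀ᶠ x in 𝓝 s₀, DifferentiableAt ℝ ψ x) ∧ DifferentiableAt ℝ (deriv ψ) s₀ ∧
    ψ s₀ = f s₀ ∧ (∀ᶠ x in 𝓝 s₀, f x ≤ ψ x) ∧ deriv (deriv ψ) s₀ ≤ 0

lemma hasUpperSupportAt_of_Ioo {f ψ : ℝ → ℝ} {s₀ δ : ℝ} (hδ : 0 < δ)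
    (hψ : DifferentiableOn ℝ ψ (Ioo (s₀ - δ) (s₀ + δ)))
    (hψ' : DifferentiableOn ℝ (deriv ψ) (Ioo (s₀ - δ) (s₀ + δ)))
    (hψs₀ : ψ s₀ = f s₀) (hle : ∀ x ∈ Ioo (s₀ - δ) (s₀ + δ), f x ≤ ψ x)
    (hψ'' : deriv (deriv ψ) s₀ ≤ 0) : HasUpperSupportAt f s₀ := by
  have hnhds : Ioo (s₀ - δ) (s₀ + δ) ∈ 𝓝 s₀ := Ioo_mem_nhds (by linarith) (by linarith)
  refine ⟨ψ, ?_, hψ'.differentiableAt hnhds, hψs₀, mem_of_superset hnhds hle, hψ''⟩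
  filter_upwards [isOpen_Ioo.eventually_mem (mem_of_mem_nhds hnhds)] with x hx
  exact hψ.differentiableAt (isOpen_Ioo.mem_nhds hx)

/-- No differentiability is needed: if `deriv (deriv f) a < 0`, the second derivative test makes
`a` also a local maximum, so `f` is locally constant and `deriv (deriv f) a = 0` after all. -/
lemma IsLocalMin.deriv_deriv_nonneg {f : ℝ → ℝ} {a : ℝ} (h : IsLocalMin f a)
    (hc : ContinuousAt f a) : 0 ≤ deriv (deriv f) a := by
  by_contra! hneg
  have hmax : IsLocalMax f a := isLocalMax_of_deriv_deriv_neg hneg h.deriv_eq_zero hc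
  have hconst : f =ᶠ[𝓝 a] fun _ => f a := by
    filter_upwards [h, hmax] with x hmin hmax using le_antisymm hmax hmin
  have hderiv : deriv f =ᶠ[𝓝 a] fun _ => 0 := by
    filter_upwards [hconst.eventuallyEq_nhds] with x hx
    rw [hx.deriv_eq, deriv_const]
  rw [hderiv.deriv_eq, deriv_const] at hneg
  exact hneg.false

lemma deriv_deriv_sub_mul_sq {ψ : ℝ → ℝ} {a : ℝ} (ε c : ℝ)
    (hψ : ∀ᶠ x in 𝓝 a, DifferentiableAt ℝ ψ x) (hψ' : DifferentiableAt ℝ (deriv ψ) a) :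
    deriv (deriv fun x => ψ x - ε * (x - c) ^ 2) a = deriv (deriv ψ) a - 2 * ε := by
  have hsq : ∀ x, HasDerivAt (fun x => ε * (x - c) ^ 2) (2 * ε * (x - c)) x := fun x => by
    refine ((((hasDerivAt_id x).sub_const c).pow 2).const_mul ε).congr_deriv ?_
    simp only [id, Nat.cast_ofNat, mul_one]
    ring
  have hderiv : deriv (fun x => ψ x - ε * (x - c) ^ 2) =ᶠ[𝓝 a]
      fun x => deriv ψ x - 2 * ε * (x - c) := by
    filter_upwards [hψ] with x hx
    exact (hx.hasDerivAt.sub (hsq x)).deriv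
  have hlin : HasDerivAt (fun x => 2 * ε * (x - c)) (2 * ε) a := by
    simpa using ((hasDerivAt_id a).sub_const c).const_mul (2 * ε)
  rw [hderiv.deriv_eq]
  exact (hψ'.hasDerivAt.sub hlin).deriv

lemma HasUpperSupportAt.not_isLocalMin_sub_mul_sq {f : ℝ → ℝ} {s₀ ε : ℝ}
    (hf : HasUpperSupportAt f s₀) (hε : 0 < ε) (c : ℝ) :
    ¬ IsLocalMin (fun x => f x - ε * (x - c) ^ 2) s₀ := by
  intro hmin
  obtain ⟨ψ, hψ, hψ', hψs₀, hle, hψ''⟩ := hf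
  have hχmin : IsLocalMin (fun x => ψ x - ε * (x - c) ^ 2) s₀ := by
    filter_upwards [hmin, hle] with x hx hfx
    simp only [hψs₀]
    linarith
  have hχc : ContinuousAt (fun x => ψ x - ε * (x - c) ^ 2) s₀ :=
    hψ.self_of_nhds.continuousAt.sub (by fun_prop)
  have := hχmin.deriv_deriv_nonneg hχc
  rw [deriv_deriv_sub_mul_sq ε c hψ hψ'] at this
  linarith

lemma min_le_of_forall_hasUpperSupportAt {f : ℝ → ℝ} {a b : ℝ} (hf : ContinuousOn f (Icc a b))
    (hsupp : ∀ s ∈ Ioo a b, HasUpperSupportAt f s) :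
    ∀ c ∈ Icc a b, min (f a) (f b) ≤ f c := by
  intro c hc
  by_contra! hlt
  set ε := (min (f a) (f b) - f c) / ((b - a) ^ 2 + 1)
  have hε : 0 < ε := div_pos (sub_pos.2 hlt) (by positivity)
  have hεbound : ε * (b - a) ^ 2 < min (f a) (f b) - f c := by
    calc ε * (b - a) ^ 2 < ε * ((b - a) ^ 2 + 1) := by gcongr; linarith
      _ = min (f a) (f b) - f c := div_mul_cancel₀ _ (by positivity)
  set g := fun x => f x - ε * (x - c) ^ 2
  have hab : a ≤ b := hc.1.trans hc.2
  have hgt_of_min_le : ∀ x ∈ Icc a b, min (f a) (f b) ≤ f x → f c < g x := by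
    intro x hx hfx
    have : ε * (x - c) ^ 2 ≤ ε * (b - a) ^ 2 :=
      mul_le_mul_of_nonneg_left (by nlinarith [hc.1, hc.2, hx.1, hx.2]) hε.le
    simp only [g]
    linarith
  obtain ⟨s, hs, hsmin⟩ := isCompact_Icc.exists_isMinOn (nonempty_Icc.2 hab)
    (hf.sub (by fun_prop) : ContinuousOn g (Icc a b))
  have hgs : g s ≤ f c := by simpa [g] using hsmin hc
  have hga : f c < g a := hgt_of_min_le a (left_mem_Icc.2 hab) (min_le_left _ _)
  have hgb : f c < g b := hgt_of_min_le b (right_mem_Icc.2 hab) (min_le_right _ _)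
  have hsIoo : s ∈ Ioo a b := by
    refine ⟨lt_of_le_of_ne hs.1 ?_, lt_of_le_of_ne hs.2 ?_⟩ <;> rintro rfl <;> linarith
  exact (hsupp s hsIoo).not_isLocalMin_sub_mul_sq hε c
    (hsmin.isLocalMin (Icc_mem_nhds hsIoo.1 hsIoo.2))

theorem periodic_upper_support_constant
    (f : ℝ → ℝ) (T : ℝ) (hT : 0 < T)
    (hf : Continuous f) (hper : Function.Periodic f T)
    (hsupp : ∀ s₀ : ℝ, ∃ δ > 0, ∃ ψ : ℝ → ℝ,
      DifferentiableOn ℝ ψ (Set.Ioo (s₀ - δ) (s₀ + δ)) ∧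
      DifferentiableOn ℝ (deriv ψ) (Set.Ioo (s₀ - δ) (s₀ + δ)) ∧
      ψ s₀ = f s₀ ∧
      (∀ x ∈ Set.Ioo (s₀ - δ) (s₀ + δ), f x ≤ ψ x) ∧
      deriv (deriv ψ) s₀ ≤ 0) :
    ∀ x y, f x = f y := by
  have hsupp' : ∀ s, HasUpperSupportAt f s := fun s => by
    obtain ⟨δ, hδ, ψ, hψ, hψ', hψs, hle, hψ''⟩ := hsupp s
    exact hasUpperSupportAt_of_Ioo hδ hψ hψ' hψs hle hψ''
  obtain ⟨_, ⟨m, rfl⟩, hmax⟩ :=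
    (hper.compact_of_continuous hT.ne' hf).exists_isGreatest (range_nonempty f)
  suffices h : ∀ z, f z = f m by intro x y; rw [h x, h y]
  intro z
  obtain ⟨y, hy, hzy⟩ := hper.exists_mem_Ico hT z m
  have hmin := min_le_of_forall_hasUpperSupportAt hf.continuousOn (fun s _ => hsupp' s) y
    (Ico_subset_Icc_self hy)
  rw [hper m, min_self] at hmin
  rw [hzy]
  exact le_antisymm (hmax ⟨y, rfl⟩) hmin
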